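/- Combining the previous identities: if I - RᵀR ≻ 0 and I - SᵀS - (RᵀS)ᵀ(I-RᵀR)⁻¹(RᵀS) ⪰ 0, then for all w⁺, w⁻, G the weak inhomogeneous boundary term (w⁺)ᵀΛ⁺w⁺ + (w⁻)ᵀΛ⁻w⁻ + 2(√|Λ⁻|w⁻)ᵀ(√|Λ⁻|w⁻ - R√Λ⁺w⁺ - SG) is bounded below by -GᵀG. -/

import Mathlib

open Matrix

/-!
Write `u = √Λ⁺ w⁺`, `v = √|Λ⁻| w⁻`, `A = I - RᵀR` and `b = RᵀSG`. The boundary term equals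
`|v - Ru - SG|² + (uᵀAu - 2uᵀb) - |SG|²`. Completing the square with respect to `A ≻ 0` gives
`uᵀAu - 2uᵀb ≥ -bᵀA⁻¹b`, and the S-condition evaluated at `G` says exactly
`|SG|² + bᵀA⁻¹b ≤ GᵀG`.
-/

namespace Matrix

variable {ι κ μ : Type*} [Fintype ι] [Fintype κ] [Fintype μ]

theorem dotProduct_transpose_mul_mulVec (A : Matrix μ ι ℝ) (B : Matrix μ κ ℝ) (x : ι → ℝ)
    (y : κ → ℝ) : x ⬝ᵥ (Aᵀ * B) *ᵥ y = (A *ᵥ x) ⬝ᵥ (B *ᵥ y) := by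
  rw [← mulVec_mulVec, dotProduct_transpose_mulVec, dotProduct_comm]

theorem PosDef.neg_dotProduct_inv_mulVec_le [DecidableEq ι] {A : Matrix ι ι ℝ} (hA : A.PosDef)
    (x b : ι → ℝ) : -(b ⬝ᵥ A⁻¹ *ᵥ b) ≤ x ⬝ᵥ A *ᵥ x - 2 * (x ⬝ᵥ b) := by
  set w := A⁻¹ *ᵥ b
  have hAw : A *ᵥ w = b := by
    rw [mulVec_mulVec, mul_nonsing_inv A ((isUnit_iff_isUnit_det A).1 hA.isUnit), one_mulVec]
  have hsymm : w ⬝ᵥ A *ᵥ x = x ⬝ᵥ b := by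
    rw [← hAw, ← dotProduct_transpose_mulVec, ← conjTranspose_eq_transpose_of_trivial,
      hA.isHermitian.eq]
  have hsq : 0 ≤ (x - w) ⬝ᵥ A *ᵥ (x - w) := by
    simpa using hA.posSemidef.dotProduct_mulVec_nonneg (x - w)
  simp only [mulVec_sub, sub_dotProduct, dotProduct_sub, hAw, hsymm] at hsq
  linarith [dotProduct_comm w b]

theorem sum_mul_sq_eq_dotProduct_sqrt_mul {l : ι → ℝ} (hl : ∀ i, 0 ≤ l i) (w : ι → ℝ) :
    ∑ i, l i * w i ^ 2 = (fun i => √(l i) * w i) ⬝ᵥ (fun i => √(l i) * w i) :=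
  Finset.sum_congr rfl fun i _ => by rw [mul_mul_mul_comm, Real.mul_self_sqrt (hl i), sq]

theorem neg_dotProduct_le_boundary_term [DecidableEq ι] [DecidableEq κ] (R : Matrix μ ι ℝ)
    (S : Matrix μ κ ℝ) (hR : (1 - Rᵀ * R).PosDef)
    (hS : (1 - Sᵀ * S - (Rᵀ * S)ᵀ * (1 - Rᵀ * R)⁻¹ * (Rᵀ * S)).PosSemidef)
    (u : ι → ℝ) (v : μ → ℝ) (G : κ → ℝ) :
    -(G ⬝ᵥ G) ≤ u ⬝ᵥ u - v ⬝ᵥ v + 2 * (v ⬝ᵥ (v - R *ᵥ u - S *ᵥ G)) := by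
  set A := 1 - Rᵀ * R
  set b := Rᵀ *ᵥ (S *ᵥ G)
  have hAu : u ⬝ᵥ A *ᵥ u = u ⬝ᵥ u - (R *ᵥ u) ⬝ᵥ (R *ᵥ u) := by
    rw [sub_mulVec, one_mulVec, dotProduct_sub, dotProduct_transpose_mul_mulVec]
  have hub : u ⬝ᵥ b = (R *ᵥ u) ⬝ᵥ (S *ᵥ G) := by
    rw [dotProduct_transpose_mulVec, dotProduct_comm]
  have hSG : G ⬝ᵥ (1 - Sᵀ * S - (Rᵀ * S)ᵀ * A⁻¹ * (Rᵀ * S)) *ᵥ G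
      = G ⬝ᵥ G - (S *ᵥ G) ⬝ᵥ (S *ᵥ G) - b ⬝ᵥ A⁻¹ *ᵥ b := by
    rw [sub_mulVec, sub_mulVec, one_mulVec, dotProduct_sub, dotProduct_sub,
      dotProduct_transpose_mul_mulVec, Matrix.mul_assoc, dotProduct_transpose_mul_mulVec,
      ← mulVec_mulVec, ← mulVec_mulVec, ← mulVec_mulVec]
  have hcompl := hR.neg_dotProduct_inv_mulVec_le u b
  have hGG : 0 ≤ G ⬝ᵥ (1 - Sᵀ * S - (Rᵀ * S)ᵀ * A⁻¹ * (Rᵀ * S)) *ᵥ G := by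
    simpa using hS.dotProduct_mulVec_nonneg G
  have hres : 0 ≤ (v - R *ᵥ u - S *ᵥ G) ⬝ᵥ (v - R *ᵥ u - S *ᵥ G) :=
    Finset.sum_nonneg fun i _ => mul_self_nonneg _
  simp only [sub_dotProduct, dotProduct_sub] at hres ⊢
  rw [dotProduct_comm (R *ᵥ u) v, dotProduct_comm (S *ᵥ G) v,
    dotProduct_comm (S *ᵥ G) (R *ᵥ u)] at hres
  linarith

end Matrix

/-- Weak inhomogeneous boundary conditions: under the R- and S-conditions, the weak
boundary term is bounded below by `-GᵀG` for all `w⁺, w⁻, G`. -/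
theorem stmt9 (n m k : ℕ) (lp : Fin n → ℝ) (lm : Fin m → ℝ)
    (hlp : ∀ i, 0 ≤ lp i) (hlm : ∀ i, lm i ≤ 0)
    (R : Matrix (Fin m) (Fin n) ℝ) (S : Matrix (Fin m) (Fin k) ℝ)
    (hR : ((1 : Matrix (Fin n) (Fin n) ℝ) - Rᵀ * R).PosDef)
    (hS : ((1 : Matrix (Fin k) (Fin k) ℝ) - Sᵀ * S
        - (Rᵀ * S)ᵀ * (1 - Rᵀ * R)⁻¹ * (Rᵀ * S)).PosSemidef) :
    ∀ (wp : Fin n → ℝ) (wm : Fin m → ℝ) (G : Fin k → ℝ),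
    -(G ⬝ᵥ G) ≤
      ∑ i, lp i * (wp i) ^ 2 + ∑ i, lm i * (wm i) ^ 2 +
      2 * ∑ i, (Real.sqrt (-(lm i)) * wm i) *
        (Real.sqrt (-(lm i)) * wm i
          - (R.mulVec (fun j => Real.sqrt (lp j) * wp j)) i - (S.mulVec G) i) := by
  intro wp wm G
  have hlm' : ∀ i, 0 ≤ -lm i := fun i => neg_nonneg.2 (hlm i)
  have hsum_lm : ∑ i, lm i * wm i ^ 2 = -∑ i, -lm i * wm i ^ 2 := by
    simp only [neg_mul, Finset.sum_neg_distrib, neg_neg]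
  rw [hsum_lm, sum_mul_sq_eq_dotProduct_sqrt_mul hlp, sum_mul_sq_eq_dotProduct_sqrt_mul hlm',
    ← sub_eq_add_neg]
  exact neg_dotProduct_le_boundary_term R S hR hS _ _ G
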